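/- arXiv:1404.7183 — 3 statements merged into one kernel-verified Lean document; each statement's English description precedes it below -/
import Mathlib

section
/- The modified logistic map w_{i+1} = w_r + 2(1 - 2w_r) w_i (1 - w_i), with initial value w_1 and parameter w_r, has the exact closed-form solution w_i = (1/2)[1 - (1/μ)(μ(1-2w_1))^{2^{i-1}}] for all i ≥ 1, where μ = 1 - 2w_r. -/
/-- The modified logistic map `w_{i+1} = w_r + 2(1-2w_r) w_i (1-w_i)` has the exact
closed-form solution `w_i = (1/2)[1 - (1/μ)(μ(1-2w_1))^{2^{i-1}}]`, where `μ = 1-2w_r ≠ 0`. -/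
theorem modified_logistic_map_solution (wr μ : ℝ) (hμdef : μ = 1 - 2 * wr) (hμ : μ ≠ 0)
    (w : ℕ → ℝ)
    (hrec : ∀ i, 1 ≤ i → w (i + 1) = wr + 2 * (1 - 2 * wr) * w i * (1 - w i)) :
    ∀ i, 1 ≤ i → w i = (1 / 2) * (1 - (1 / μ) * (μ * (1 - 2 * w 1)) ^ (2 ^ (i - 1))) := by
  intro i hi
  induction i, hi using Nat.le_induction with
  | base =>
    simp only [Nat.sub_self, pow_zero, pow_one]
    field_simp
    ring
  | succ n hn ih =>
    rw [hrec n hn, ih, ← hμdef]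
    have h1 : (n + 1) - 1 = n := by omega
    have h2 : n = (n - 1) + 1 := by omega
    rw [h1, h2, pow_succ, pow_mul]
    set t := (μ * (1 - 2 * w 1)) ^ 2 ^ (n - 1) with ht
    have hwr : wr = (1 - μ) / 2 := by rw [hμdef]; ring
    rw [hwr]
    field_simp
    simp only [Nat.add_sub_cancel, Nat.add_sub_cancel_left, ht, ← pow_mul]
    ring
end

section
/- Under the recursions of the repeater state coefficients, the difference z_i := x_i - y_i (equal to a_i + b_i) satisfies z_{i+1} = (a+b) z_i^2 / s_i^2, and hence for i ≥ 2, z_i = ν (z_1 s / (ν s_1))^{2^{i-1}} where ν = s^2/(a+b) and s = a+b+2c, provided s_i = s for all i ≥ 2 and a + b > 0. -/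
/-- Under the repeater-state coefficient recursions, `z_i = a_i + b_i` satisfies
`z_{i+1} = (a+b) z_i^2 / s^2`, hence for `i ≥ 2`,
`z_i = ν (z_1 s / (ν s_1))^{2^{i-1}}` where `ν = s^2/(a+b)` and `s = a+b+2c`. -/
theorem z_closed_form (a b c s s1 ν : ℝ) (ha : 0 < a) (hb : 0 < b) (hc : 0 < c)
    (hs : s = a + b + 2 * c) (hs1 : 0 < s1) (hν : ν = s ^ 2 / (a + b))
    (z : ℕ → ℝ) (hz1 : 0 < z 1)
    (hz2 : z 2 = (a + b) * (z 1) ^ 2 / s1 ^ 2)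
    (hrec : ∀ i, 2 ≤ i → z (i + 1) = (a + b) * (z i) ^ 2 / s ^ 2) :
    ∀ i, 2 ≤ i → z i = ν * (z 1 * s / (ν * s1)) ^ (2 ^ (i - 1)) := by
  have hab : (0:ℝ) < a + b := by linarith
  have hspos : (0:ℝ) < s := by rw [hs]; linarith
  have hνpos : (0:ℝ) < ν := by rw [hν]; positivity
  have hνab : ν * (a + b) = s ^ 2 := by
    rw [hν]; field_simp
  intro i hi
  induction i, hi using Nat.le_induction with
  | base =>
    rw [hz2]
    have : (2:ℕ) ^ (2 - 1) = 2 := rfl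
    rw [this]
    field_simp
    linear_combination hνab
  | succ n hn ih =>
    rw [hrec n hn, ih]
    have h1 : n + 1 - 1 = n - 1 + 1 := by omega
    rw [h1]
    conv_rhs => rw [pow_succ, pow_mul]
    rw [← hνab]
    field_simp
end

section
/- Let η ∈ (0,1], η_d, η_e, λ_m, η_r ∈ (0,1], M ≥ 1, T_q > 0, N ≥ 1. With λ = η^{1/(2N)}, P_1 = η_d^2, 4s = η_r^2 λ_m^2/2, 4s_1 = η_e^2 η^{1/N}/2, and P_succ = (4s)^{N-1}(1-(1-4s_1)^M)^N, the rate R = P_1 P_succ/(2T_q) satisfies R ≤ η·A·B^N where A = η_d^2/(η_r^2 λ_m^2 T_q) and B = η_r^2 λ_m^2 η_e^2 M/4. -/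
/-- With zero dark clicks, the secret-key rate `R = P_1 P_succ/(2T_q)` of an `N`-link
repeater chain satisfies the linear-in-`η` bound `R ≤ η A B^N`, where
`A = η_d^2/(η_r^2 λ_m^2 T_q)` and `B = η_r^2 λ_m^2 η_e^2 M/4`. -/
theorem rate_linear_upper_bound (η ηd ηe ηr lm Tq : ℝ) (M N : ℕ)
    (hη : η ∈ Set.Ioc (0 : ℝ) 1) (hηd : ηd ∈ Set.Ioc (0 : ℝ) 1)
    (hηe : ηe ∈ Set.Ioc (0 : ℝ) 1) (hηr : ηr ∈ Set.Ioc (0 : ℝ) 1)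
    (hlm : lm ∈ Set.Ioc (0 : ℝ) 1) (hTq : 0 < Tq) (hM : 1 ≤ M) (hN : 1 ≤ N)
    (s s1 P1 Psucc R A B : ℝ)
    (hs : 4 * s = ηr ^ 2 * lm ^ 2 / 2)
    (hs1 : 4 * s1 = ηe ^ 2 * η ^ ((1 : ℝ) / (N : ℝ)) / 2)
    (hP1 : P1 = ηd ^ 2)
    (hPsucc : Psucc = (4 * s) ^ (N - 1) * (1 - (1 - 4 * s1) ^ M) ^ N)
    (hR : R = P1 * Psucc / (2 * Tq))
    (hA : A = ηd ^ 2 / (ηr ^ 2 * lm ^ 2 * Tq))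
    (hB : B = ηr ^ 2 * lm ^ 2 * ηe ^ 2 * (M : ℝ) / 4) :
    R ≤ η * (A * B ^ N) := by
  obtain ⟨hη0, hη1⟩ := hη
  obtain ⟨hηd0, hηd1⟩ := hηd
  obtain ⟨hηe0, hηe1⟩ := hηe
  obtain ⟨hηr0, hηr1⟩ := hηr
  obtain ⟨hlm0, hlm1⟩ := hlm
  have hNpos : (0:ℝ) < (N:ℝ) := by exact_mod_cast hN
  set X : ℝ := η ^ ((1:ℝ) / (N:ℝ)) with hXdef
  have hX0 : 0 < X := Real.rpow_pos_of_pos hη0 _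
  have hX1 : X ≤ 1 :=
    Real.rpow_le_one hη0.le hη1 (by positivity)
  have hXN : X ^ N = η := by
    rw [← Real.rpow_natCast X N, hXdef, ← Real.rpow_mul hη0.le]
    rw [one_div_mul_cancel hNpos.ne', Real.rpow_one]
  -- bounds on 4s and 4s1
  have h4s0 : 0 < 4 * s := by rw [hs]; positivity
  have h4s1pos : 0 < 4 * s1 := by rw [hs1]; positivity
  have h4s1le : 4 * s1 ≤ 1 := by
    rw [hs1]
    nlinarith [sq_nonneg ηe, sq_nonneg (ηe - 1), hX0.le]
  -- Bernoulli: 1 - M * (4 s1) ≤ (1 - 4 s1)^M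
  have hb : 1 - (M:ℝ) * (4 * s1) ≤ (1 - 4 * s1) ^ M := by
    have := one_add_mul_le_pow (a := -(4 * s1)) (by linarith) M
    calc 1 - (M:ℝ) * (4 * s1) = 1 + (M:ℝ) * (-(4 * s1)) := by ring
    _ ≤ (1 + -(4 * s1)) ^ M := this
    _ = (1 - 4 * s1) ^ M := by ring_nf
  have hnn : 0 ≤ 1 - (1 - 4 * s1) ^ M := by
    have : (1 - 4 * s1) ^ M ≤ 1 := pow_le_one₀ (by linarith) (by linarith)
    linarith
  have hle : 1 - (1 - 4 * s1) ^ M ≤ (M:ℝ) * (4 * s1) := by linarith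
  -- key bound on Psucc
  have hkey : Psucc ≤ (4 * s) ^ (N - 1) * ((M:ℝ) * (4 * s1)) ^ N := by
    rw [hPsucc]
    exact mul_le_mul_of_nonneg_left (pow_le_pow_left₀ hnn hle N) (by positivity)
  have hRle : R ≤ ηd ^ 2 * ((4 * s) ^ (N - 1) * ((M:ℝ) * (4 * s1)) ^ N) / (2 * Tq) := by
    rw [hR, hP1]
    apply div_le_div_of_nonneg_right ?_ (by linarith)
    exact mul_le_mul_of_nonneg_left hkey (by positivity)
  refine hRle.trans_eq ?_
  -- now the exact identity
  obtain ⟨n, rfl⟩ : ∃ n, N = n + 1 := ⟨N - 1, (Nat.succ_pred_eq_of_pos hN).symm⟩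
  have hsub : n + 1 - 1 = n := rfl
  rw [hsub, hs, hs1, hA, hB, ← hXN]
  have ha : ηr ^ 2 * lm ^ 2 ≠ 0 := by positivity
  have h24 : (2:ℝ) ^ (n * 2) = 4 ^ n := by rw [Nat.mul_comm, pow_mul]; norm_num
  field_simp
  ring_nf
  rw [show ((1:ℝ) / 2) ^ (n * 2) = (1 / 4) ^ n by rw [Nat.mul_comm, pow_mul]; norm_num]
end
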